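/- If y ∉ C is red with respect to C (y has exactly one neighbor in C), then m(C ∪ {y}) ≤ m(C) − 1, q(C ∪ {y}) ≤ q(C) and p̂(C ∪ {y}) ≤ p̂(C) + 1; consequently f(C ∪ {y}) ≤ f(C). -/

import Mathlib

open SimpleGraph

variable {V : Type*} [Fintype V] [DecidableEq V]

/-- `pG G C` : number of connected components of the induced subgraph `G[C]`. -/
noncomputable def pG (G : SimpleGraph V) (C : Set V) : ℕ :=
  Nat.card (G.induce C).ConnectedComponent

/-- `spanG G C` : the spanning subgraph `G⟨C⟩` of `G`, with vertex set `V` and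
edge set consisting of those edges of `G` with at least one endpoint in `C`. -/
def spanG (G : SimpleGraph V) (C : Set V) : SimpleGraph V where
  Adj u v := G.Adj u v ∧ (u ∈ C ∨ v ∈ C)
  symm := ⟨fun u v h => ⟨h.1.symm, h.2.symm⟩⟩
  loopless := ⟨fun v h => G.loopless.irrefl v h.1⟩

/-- `qG G C` : number of connected components of `G⟨C⟩`. -/
noncomputable def qG (G : SimpleGraph V) (C : Set V) : ℕ :=
  Nat.card (spanG G C).ConnectedComponent

/-- number of neighbors of `v` lying in `C`. -/
noncomputable def nbrsIn (G : SimpleGraph V) (C : Set V) (v : V) : ℕ :=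
  {u | u ∈ C ∧ G.Adj v u}.ncard

/-- `mG G C` : number of vertices outside `C` having at most one neighbor in `C`. -/
noncomputable def mG (G : SimpleGraph V) (C : Set V) : ℕ :=
  {v | v ∉ C ∧ nbrsIn G C v ≤ 1}.ncard

/-- `phat G C = max_{x ∈ C} pG G (C \ {x})`, with `phat G ∅ = 0`. -/
noncomputable def phat (G : SimpleGraph V) (C : Set V) : ℕ :=
  sSup ((fun x => pG G (C \ {x})) '' C)

/-- the potential function `f(C) = p̂(C) + q(C) + m(C)`. -/
noncomputable def fG (G : SimpleGraph V) (C : Set V) : ℕ :=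
  phat G C + qG G C + mG G C

/-- `G` is biconnected: `|V| ≥ 3` and deleting any single vertex leaves `G` connected. -/
def Biconnected (G : SimpleGraph V) : Prop :=
  3 ≤ Fintype.card V ∧ ∀ v : V, (G.induce {v}ᶜ).Connected

/-!
Adding `y` to `C` only adds edges to `G⟨C⟩` and only raises neighbour counts in `C`, so `q` and
the set counted by `m` can only shrink, and the red vertex `y` itself leaves that set. Adding one
vertex to an induced subgraph creates at most one new component; applied to `C \ {x}` and to `C`
this bounds `p̂(C ∪ {y})` by `p̂(C) + 1`.
-/

section

variable {V : Type*} {G : SimpleGraph V}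

lemma nbrsIn_mono [Finite V] {C D : Set V} (h : C ⊆ D) (v : V) :
    nbrsIn G C v ≤ nbrsIn G D v :=
  Set.ncard_le_ncard fun _ hu => ⟨h hu.1, hu.2⟩

lemma mG_insert_add_one_le [Finite V] {C : Set V} {y : V} (hy : y ∉ C)
    (hred : nbrsIn G C y ≤ 1) : mG G (insert y C) + 1 ≤ mG G C := by
  have hsub : {v | v ∉ insert y C ∧ nbrsIn G (insert y C) v ≤ 1} ⊆
      {v | v ∉ C ∧ nbrsIn G C v ≤ 1} \ {y} := by
    rintro v ⟨hvC, hv⟩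
    rw [Set.mem_insert_iff, not_or] at hvC
    exact ⟨⟨hvC.2, (nbrsIn_mono (Set.subset_insert y C) v).trans hv⟩, hvC.1⟩
  calc mG G (insert y C) + 1
      ≤ ({v | v ∉ C ∧ nbrsIn G C v ≤ 1} \ {y}).ncard + 1 := by
        gcongr; exact Set.ncard_le_ncard hsub
    _ = mG G C := Set.ncard_sdiff_singleton_add_one ⟨hy, hred⟩

lemma spanG_mono {C D : Set V} (h : C ⊆ D) : spanG G C ≤ spanG G D :=
  fun _ _ huv => ⟨huv.1, huv.2.imp (@h _) (@h _)⟩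

lemma qG_antitone [Finite V] {C D : Set V} (h : C ⊆ D) : qG G D ≤ qG G C :=
  ConnectedComponent.card_le_card_of_le (spanG_mono h)

lemma pG_insert_le [Finite V] (S : Set V) (x : V) : pG G (insert x S) ≤ pG G S + 1 := by
  let ι : G.induce S ↪g G.induce (insert x S) := G.induceHomOfLE (Set.subset_insert x S)
  have hsurj : Function.Surjective <| Sum.elim (ConnectedComponent.map ι.toHom)
      fun _ : Unit => (G.induce (insert x S)).connectedComponentMk ⟨x, Set.mem_insert x S⟩ := by
    refine ConnectedComponent.ind fun ⟨v, hv⟩ => ?_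
    rcases Set.mem_insert_iff.mp hv with rfl | hvS
    · exact ⟨Sum.inr (), rfl⟩
    · exact ⟨Sum.inl (G.induce S |>.connectedComponentMk ⟨v, hvS⟩), rfl⟩
  simpa [pG, Nat.card_sum] using Nat.card_le_card_of_surjective _ hsurj

lemma pG_diff_singleton_le_phat [Finite V] {C : Set V} {x : V} (hx : x ∈ C) :
    pG G (C \ {x}) ≤ phat G C :=
  le_csSup (C.toFinite.image _).bddAbove ⟨x, hx, rfl⟩

lemma pG_le_phat_add_one [Finite V] (C : Set V) : pG G C ≤ phat G C + 1 := by
  rcases C.eq_empty_or_nonempty with rfl | ⟨x, hx⟩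
  · simp [pG]
  · calc pG G C = pG G (insert x (C \ {x})) := by
          rw [Set.insert_sdiff_singleton, Set.insert_eq_of_mem hx]
      _ ≤ pG G (C \ {x}) + 1 := pG_insert_le _ x
      _ ≤ phat G C + 1 := by gcongr; exact pG_diff_singleton_le_phat hx

lemma phat_insert_le [Finite V] {C : Set V} {y : V} (hy : y ∉ C) :
    phat G (insert y C) ≤ phat G C + 1 := by
  refine csSup_le' ?_
  rintro _ ⟨x, hx, rfl⟩
  dsimp only
  rcases Set.mem_insert_iff.mp hx with rfl | hxC
  · rw [Set.insert_sdiff_of_mem _ (Set.mem_singleton x), Set.sdiff_singleton_eq_self hy]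
    exact pG_le_phat_add_one C
  · have hyx : y ≠ x := fun h => hy (h ▸ hxC)
    rw [← Set.insert_sdiff_singleton_comm hyx]
    exact (pG_insert_le _ y).trans (by gcongr; exact pG_diff_singleton_le_phat hxC)

end

theorem stmt2_general (G : SimpleGraph V) (C : Set V) (y : V)
    (hy : y ∉ C) (hred : nbrsIn G C y = 1) :
    (mG G (C ∪ {y}) : ℤ) ≤ (mG G C : ℤ) - 1 ∧ qG G (C ∪ {y}) ≤ qG G C ∧
      phat G (C ∪ {y}) ≤ phat G C + 1 ∧ fG G (C ∪ {y}) ≤ fG G C := by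
  rw [Set.union_singleton]
  have hm := mG_insert_add_one_le hy hred.le
  have hq : qG G (insert y C) ≤ qG G C := qG_antitone (Set.subset_insert y C)
  have hp := phat_insert_le (G := G) hy
  refine ⟨by omega, hq, hp, ?_⟩
  unfold fG
  omega

/-- if `y ∉ C` is red w.r.t. `C` (exactly one neighbor in `C`), then
`m(C∪{y}) ≤ m(C) - 1`, `q(C∪{y}) ≤ q(C)`, `p̂(C∪{y}) ≤ p̂(C) + 1`, and hence
`f(C∪{y}) ≤ f(C)`. -/
theorem stmt2 (G : SimpleGraph V) (hG : Biconnected G) (C : Set V) (y : V)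
    (hy : y ∉ C) (hred : nbrsIn G C y = 1) :
    (mG G (C ∪ {y}) : ℤ) ≤ (mG G C : ℤ) - 1 ∧ qG G (C ∪ {y}) ≤ qG G C ∧
      phat G (C ∪ {y}) ≤ phat G C + 1 ∧ fG G (C ∪ {y}) ≤ fG G C :=
  stmt2_general G C y hy hred
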